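/- arXiv:1612.02961 — 4 statements merged into one kernel-verified Lean document; each statement's English description precedes it below -/
import Mathlib

section
/- Let F : ℝ → ℝ be nondecreasing, bounded, and left-continuous, and let y, H : ℝ → ℝ be functions such that for every ξ ∈ ℝ the set {x ∈ ℝ : x + F(x) < y(ξ) + H(ξ)} is nonempty and bounded above with y(ξ) = sup{x ∈ ℝ : x + F(x) < y(ξ) + H(ξ)}. Then for every ξ ∈ ℝ one has F(y(ξ)) ≤ H(ξ) ≤ F(y(ξ)+), where F(z+) denotes the right-hand limit lim_{x→z+} F(x). -/
open Set Filter Function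

theorem lagrangian_energy_bracketing
    (F : ℝ → ℝ) (hFmono : Monotone F)
    (hFbdd : ∃ M : ℝ, ∀ x, |F x| ≤ M)
    (hFlc : ∀ x : ℝ, Tendsto F (nhdsWithin x (Iio x)) (nhds (F x)))
    (y H : ℝ → ℝ)
    (hne : ∀ ξ : ℝ, {x : ℝ | x + F x < y ξ + H ξ}.Nonempty)
    (hbdd : ∀ ξ : ℝ, BddAbove {x : ℝ | x + F x < y ξ + H ξ})
    (hy : ∀ ξ : ℝ, y ξ = sSup {x : ℝ | x + F x < y ξ + H ξ}) :
    ∀ ξ : ℝ, F (y ξ) ≤ H ξ ∧ H ξ ≤ Function.rightLim F (y ξ) := by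
  intro ξ
  set S : Set ℝ := {x : ℝ | x + F x < y ξ + H ξ} with hS
  have hle : ∀ x ∈ S, x ≤ y ξ := fun x hx => (hy ξ) ▸ le_csSup (hbdd ξ) hx
  constructor
  · -- F (y ξ) ≤ H ξ
    refine le_of_forall_pos_le_add ?_
    intro ε hε
    -- use left continuity at y ξ
    have htend := hFlc (y ξ)
    have h1 : ∀ᶠ x in nhdsWithin (y ξ) (Iio (y ξ)), F (y ξ) - ε / 2 < F x := by
      have : F (y ξ) - ε / 2 < F (y ξ) := by linarith
      exact htend.eventually (eventually_gt_nhds this)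
    rw [Metric.tendsto_nhdsWithin_nhds] at htend
    -- choose δ
    have hδ : ∃ δ > 0, δ ≤ ε / 2 ∧ ∀ x ∈ Iio (y ξ), |x - y ξ| < δ → |F x - F (y ξ)| < ε / 2 := by
      obtain ⟨δ, hδpos, hδ⟩ := htend (ε / 2) (by linarith)
      refine ⟨min δ (ε / 2), lt_min hδpos (by linarith), min_le_right _ _, ?_⟩
      intro x hx hxd
      have := hδ hx (by simpa [Real.dist_eq] using lt_of_lt_of_le hxd (min_le_left _ _))
      simpa [Real.dist_eq] using this
    obtain ⟨δ, hδpos, hδε, hδ⟩ := hδ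
    -- pick x ∈ S with y ξ - δ < x
    have hlt : y ξ - δ < sSup S := by rw [← hy ξ]; linarith
    obtain ⟨x, hxS, hxgt⟩ := exists_lt_of_lt_csSup (hne ξ) hlt
    have hxle : x ≤ y ξ := hle x hxS
    rcases eq_or_lt_of_le hxle with heq | hlt'
    · -- y ξ ∈ S
      have : y ξ + F (y ξ) < y ξ + H ξ := by
        have h' : x + F x < y ξ + H ξ := hxS
        rw [heq] at h'; exact h'
      linarith
    · have habs : |x - y ξ| < δ := by rw [abs_sub_lt_iff]; constructor <;> linarith
      have hFx := hδ x hlt' habs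
      rw [abs_sub_lt_iff] at hFx
      have hxin : x + F x < y ξ + H ξ := hxS
      -- F (y ξ) < F x + ε/2 < (y ξ - x + H ξ) + ε/2 < δ + H ξ + ε/2 ≤ H ξ + ε
      linarith [hFx.2]
  · -- H ξ ≤ rightLim F (y ξ)
    by_contra hc
    push_neg at hc
    set L := Function.rightLim F (y ξ) with hL
    set ε := H ξ - L with hε
    have hεpos : 0 < ε := by simp [hε]; linarith
    have htend := hFmono.tendsto_rightLim (y ξ)
    have h1 : ∀ᶠ x in nhdsWithin (y ξ) (Ioi (y ξ)), F x < L + ε / 2 :=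
      htend.eventually (eventually_lt_nhds (by linarith))
    have h2 : ∀ᶠ x in nhdsWithin (y ξ) (Ioi (y ξ)), x ∈ Ioo (y ξ) (y ξ + ε / 2) :=
      Ioo_mem_nhdsGT_of_mem ⟨le_refl _, by linarith⟩
    obtain ⟨x, hx1, hx2⟩ := (h1.and h2).exists
    have hxS : x ∈ S := by
      have : x + F x < (y ξ + ε / 2) + (L + ε / 2) := add_lt_add hx2.2 hx1
      simpa [hS, Set.mem_setOf_eq] using this.trans_le (by simp [hε]; ring_nf; linarith)
    exact absurd (hle x hxS) (not_le.mpr hx2.1)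
end

section
/- Let C > 0. Let F : ℝ → [0,C] be nondecreasing with lim_{x→−∞} F(x) = 0 and lim_{x→+∞} F(x) = C; let H : ℝ → [0,C] be continuous and nondecreasing with lim_{ξ→−∞} H(ξ) = 0 and lim_{ξ→+∞} H(ξ) = C; and let y : ℝ → ℝ be continuous, nondecreasing and surjective. Assume F(y(ξ)) ≤ H(ξ) ≤ F(y(ξ)+) for every ξ ∈ ℝ, where F(z+) = lim_{x→z+} F(x). For η ∈ (0,C) set l(η) = sup{ξ ∈ ℝ : H(ξ) < η}. Then for every η ∈ (0,C): l(η) is finite, H(l(η)) = η, and sup{x ∈ ℝ : F(x) < η} = y(l(η)). -/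
open Set Filter Function

theorem pseudo_inverse_via_lagrangian
    (C : ℝ) (hC : 0 < C)
    (F : ℝ → ℝ) (hFmono : Monotone F) (hFrange : ∀ x, F x ∈ Icc 0 C)
    (hFbot : Tendsto F atBot (nhds 0)) (hFtop : Tendsto F atTop (nhds C))
    (H : ℝ → ℝ) (hHcont : Continuous H) (hHmono : Monotone H)
    (hHrange : ∀ ξ, H ξ ∈ Icc 0 C)
    (hHbot : Tendsto H atBot (nhds 0)) (hHtop : Tendsto H atTop (nhds C))
    (y : ℝ → ℝ) (hycont : Continuous y) (hymono : Monotone y)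
    (hysurj : Function.Surjective y)
    (hsandwich : ∀ ξ : ℝ, F (y ξ) ≤ H ξ ∧ H ξ ≤ Function.rightLim F (y ξ)) :
    ∀ η ∈ Ioo 0 C,
      {ξ : ℝ | H ξ < η}.Nonempty ∧ BddAbove {ξ : ℝ | H ξ < η} ∧
      H (sSup {ξ : ℝ | H ξ < η}) = η ∧
      {x : ℝ | F x < η}.Nonempty ∧ BddAbove {x : ℝ | F x < η} ∧
      sSup {x : ℝ | F x < η} = y (sSup {ξ : ℝ | H ξ < η}) := by
  intro η hη
  obtain ⟨hη0, hηC⟩ := hη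
  set S : Set ℝ := {ξ : ℝ | H ξ < η} with hS
  -- S nonempty
  have hSne : S.Nonempty := by
    obtain ⟨ξ, hξ⟩ := (hHbot.eventually (gt_mem_nhds hη0)).exists
    exact ⟨ξ, hξ⟩
  -- S bounded above
  have hSbdd : BddAbove S := by
    obtain ⟨ξ0, hξ0⟩ := (hHtop.eventually (lt_mem_nhds hηC)).exists
    refine ⟨ξ0, fun ξ hξ => ?_⟩
    by_contra h
    push_neg at h
    exact absurd (lt_of_lt_of_le hξ0 (hHmono h.le)) (not_lt.2 hξ.le)
  set l : ℝ := sSup S with hl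
  -- for ξ > l, η ≤ H ξ
  have hub : ∀ ξ : ℝ, l < ξ → η ≤ H ξ := by
    intro ξ hξ
    by_contra h
    push_neg at h
    exact absurd (le_csSup hSbdd h) (not_le.2 hξ)
  -- H l ≥ η
  have hHl_ge : η ≤ H l := by
    have htend : Tendsto H (nhdsWithin l (Ioi l)) (nhds (H l)) :=
      (hHcont.continuousAt).continuousWithinAt
    refine ge_of_tendsto htend ?_
    filter_upwards [self_mem_nhdsWithin] with ξ hξ
    exact hub ξ hξ
  -- H l ≤ η
  have hHl_le : H l ≤ η := by
    by_contra h
    push_neg at h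
    have hmem : {ξ : ℝ | η < H ξ} ∈ nhds l :=
      hHcont.continuousAt.preimage_mem_nhds (isOpen_Ioi.mem_nhds h)
    obtain ⟨δ, hδ, hball⟩ := Metric.mem_nhds_iff.1 hmem
    obtain ⟨ξ, hξS, hξgt⟩ := exists_lt_of_lt_csSup hSne (by linarith : l - δ < l)
    have hξle : ξ ≤ l := le_csSup hSbdd hξS
    have hmemball : ξ ∈ Metric.ball l δ := by
      rw [Metric.mem_ball, Real.dist_eq, abs_lt]
      constructor <;> linarith
    have h1 : η < H ξ := hball hmemball
    have h2 : H ξ < η := hξS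
    linarith
  -- F set nonempty
  have hFne : {x : ℝ | F x < η}.Nonempty := by
    obtain ⟨x, hx⟩ := (hFbot.eventually (gt_mem_nhds hη0)).exists
    exact ⟨x, hx⟩
  -- y l is an upper bound for {F < η}
  have hubF : ∀ x ∈ {x : ℝ | F x < η}, x ≤ y l := by
    intro x hx
    by_contra h
    push_neg at h
    obtain ⟨ξ, hξ⟩ := hysurj ((y l + x) / 2)
    have hyξ1 : y l < y ξ := by rw [hξ]; linarith
    have hyξ2 : y ξ < x := by rw [hξ]; linarith
    have hlξ : l < ξ := by
      by_contra hc
      push_neg at hc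
      exact absurd (hymono hc) (not_le.2 hyξ1)
    have h1 : η ≤ H ξ := hub ξ hlξ
    have h2 : H ξ ≤ Function.rightLim F (y ξ) := (hsandwich ξ).2
    have h3 : Function.rightLim F (y ξ) ≤ F x := hFmono.rightLim_le hyξ2
    exact absurd (h1.trans (h2.trans h3)) (not_le.2 hx)
  have hFbdd : BddAbove {x : ℝ | F x < η} := ⟨y l, hubF⟩
  -- every x < y l is in {F < η}
  have hbelow : ∀ x : ℝ, x < y l → F x < η := by
    intro x hx
    obtain ⟨ξ', hξ'⟩ := hysurj ((x + y l) / 2)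
    have hyξ1 : x < y ξ' := by rw [hξ']; linarith
    have hyξ2 : y ξ' < y l := by rw [hξ']; linarith
    have hξl : ξ' < l := by
      by_contra hc
      push_neg at hc
      exact absurd (hymono hc) (not_le.2 hyξ2)
    obtain ⟨ξ'', hξ''S, hξ''gt⟩ := exists_lt_of_lt_csSup hSne hξl
    have : F x ≤ F (y ξ'') := hFmono (hyξ1.le.trans (hymono hξ''gt.le))
    exact lt_of_le_of_lt (this.trans (hsandwich ξ'').1) hξ''S
  have hsup_eq : sSup {x : ℝ | F x < η} = y l := by
    apply le_antisymm (csSup_le hFne hubF)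
    refine le_of_forall_lt fun c hc => ?_
    obtain ⟨c', hc1, hc2⟩ := exists_between hc
    exact lt_of_lt_of_le hc1 (le_csSup hFbdd (hbelow c' hc2))
  exact ⟨hSne, hSbdd, le_antisymm hHl_le hHl_ge, hFne, hFbdd, hsup_eq⟩
end

section
/- For j = 1,2, let μ_{0,j} be a nonnegative finite Borel measure on ℝ with C_j = μ_{0,j}(ℝ) > 0 and distribution function F_{0,j}(x) = μ_{0,j}((−∞,x)), satisfying the moment condition ∫_{−∞}^{0} F_{0,j}(x) dx + ∫_{0}^{∞} (C_j − F_{0,j}(x)) dx < ∞, and let u_{0,j} : ℝ → ℝ be continuous and bounded. Define χ_{0,j}(η) = sup{x ∈ ℝ : F_{0,j}(x) < η} and 𝒰_{0,j}(η) = u_{0,j}(χ_{0,j}(η)) for η ∈ (0,C_j), and the evolved quantities χ_j(t,η) = (t²/4)(η − C_j/2) + t𝒰_{0,j}(η) + χ_{0,j}(η), 𝒰_j(t,η) = (t/2)(η − C_j/2) + 𝒰_{0,j}(η). Define d(t) = ‖𝒰₁(t,C₁·) − 𝒰₂(t,C₂·)‖_{L^∞((0,1))} + ‖χ₁(t,C₁·)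 − χ₂(t,C₂·)‖_{L¹((0,1))} + |C₁ − C₂|. Then for every t ≥ 0, d(t) is finite and d(t) ≤ (1 + t + t²/8) d(0). -/
/-!
In the rescaled label `η ∈ (0, 1)` everything is explicit. With `Hⱼ η` the pseudo-inverse of `Fⱼ`
at `Cⱼ η`, `V = u₁ ∘ H₁ - u₂ ∘ H₂`, `W = H₁ - H₂` and `L η = (C₁ - C₂)(η - 1/2)`, the two
differences in `d t` are `(t/2) L + V` and `(t²/4) L + t V + W`, while
`d 0 = ‖V‖_∞ + ‖W‖₁ + |C₁ - C₂|`. As `|L| ≤ |C₁ - C₂| / 2` and `‖V‖₁ ≤ ‖V‖_∞` on a probability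
space, the triangle inequality gives `d t ≤ (1 + t + t²/8) d 0`. Finiteness of `d 0` comes from
the boundedness of `uⱼ` and from the integrability of `Hⱼ`, which is the layer-cake formula:
`{H > s}` and `{H < -s}` have measure at most `C - F s` and `F (-s)`, and these are integrable
on `s > 0` by the moment condition.
-/

open MeasureTheory Set ENNReal

section LayerCake

variable {α : Type*} [MeasurableSpace α] {μ : Measure α} {f : α → ℝ}

theorem lintegral_ofReal_eq_lintegral_meas_lt (hf : AEMeasurable f μ) :
    ∫⁻ x, ENNReal.ofReal (f x) ∂μ = ∫⁻ t in Ioi 0, μ {x | t < f x} := by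
  have hpos : ∀ t ∈ Ioi (0 : ℝ), μ {x | t < max (f x) 0} = μ {x | t < f x} := fun t ht => by
    simp only [lt_max_iff, not_lt_of_gt (mem_Ioi.1 ht), or_false]
  rw [← setLIntegral_congr_fun measurableSet_Ioi hpos,
    ← lintegral_eq_lintegral_meas_lt μ (f := fun x => max (f x) 0)
      (ae_of_all _ fun x => le_max_right _ _) (hf.max aemeasurable_const)]
  simp

theorem integrable_of_lintegral_meas_lt_lt_top (hf : AEMeasurable f μ)
    (hpos : ∫⁻ t in Ioi 0, μ {x | t < f x} < ∞) (hneg : ∫⁻ t in Ioi 0, μ {x | f x < -t} < ∞) :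
    Integrable f μ := by
  refine ⟨hf.aestronglyMeasurable, ?_⟩
  have hle : ∀ x, ‖f x‖ₑ ≤ ENNReal.ofReal (f x) + ENNReal.ofReal (-f x) := fun x => by
    rw [Real.enorm_eq_ofReal_abs, abs_eq_max_neg, ENNReal.ofReal_max]
    exact max_le le_self_add le_add_self
  have hneg' : ∫⁻ x, ENNReal.ofReal (-f x) ∂μ = ∫⁻ t in Ioi 0, μ {x | f x < -t} := by
    simpa only [lt_neg] using lintegral_ofReal_eq_lintegral_meas_lt (f := fun x => -f x) hf.neg
  calc ∫⁻ x, ‖f x‖ₑ ∂μ ≤ ∫⁻ x, ENNReal.ofReal (f x) + ENNReal.ofReal (-f x) ∂μ := lintegral_mono hle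
    _ = ∫⁻ x, ENNReal.ofReal (f x) ∂μ + ∫⁻ x, ENNReal.ofReal (-f x) ∂μ :=
        lintegral_add_left' hf.ennreal_ofReal _
    _ < ∞ := by
        rw [lintegral_ofReal_eq_lintegral_meas_lt hf, hneg']
        exact add_lt_top.2 ⟨hpos, hneg⟩

theorem exists_lt_of_integrable_of_not_isFiniteMeasure {g : α → ℝ} {η : ℝ}
    (hg : Integrable g μ) (hμ : ¬ IsFiniteMeasure μ) (hη : 0 < η) : ∃ x, g x < η := by
  by_contra! h
  have hconst : Integrable (fun _ => η) μ :=
    hg.mono' aestronglyMeasurable_const <| ae_of_all _ fun x => by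
      rw [Real.norm_eq_abs, abs_of_pos hη]
      exact h x
  exact hμ ((integrable_const_iff.1 hconst).resolve_left hη.ne')

end LayerCake

/-- `sSup` returns the junk value `0` on empty or unbounded sets; on `(0, C)` the moment conditions
rule both out. -/
noncomputable def pseudoInv (F : ℝ → ℝ) (η : ℝ) : ℝ := sSup {x | F x < η}

namespace pseudoInv

variable {F : ℝ → ℝ} {a C η t : ℝ}

theorem nonempty_setOf_lt (hF : IntegrableOn F (Iio a)) (hη : 0 < η) :
    {x | F x < η}.Nonempty :=
  exists_lt_of_integrable_of_not_isFiniteMeasure hF (by simp [isFiniteMeasure_restrict]) hη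

theorem bddAbove_setOf_lt (hmono : Monotone F) (hF : IntegrableOn (fun x => C - F x) (Ioi a))
    (hη : η < C) : BddAbove {x | F x < η} := by
  obtain ⟨x₀, hx₀⟩ := exists_lt_of_integrable_of_not_isFiniteMeasure hF
    (by simp [isFiniteMeasure_restrict]) (sub_pos.2 hη)
  exact ⟨x₀, fun x hx => le_of_not_gt fun hlt => (hmono hlt.le).not_gt (by linarith [hx.out])⟩

theorem lt_of_lt_pseudoInv (hmono : Monotone F) (hne : {x | F x < η}.Nonempty)
    (ht : t < pseudoInv F η) : F t < η := by
  obtain ⟨x, hx, htx⟩ := exists_lt_of_lt_csSup hne ht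
  exact (hmono htx.le).trans_lt hx

theorem le_of_pseudoInv_lt (hbdd : BddAbove {x | F x < η}) (ht : pseudoInv F η < t) :
    η ≤ F t :=
  le_of_not_gt fun h => (le_csSup hbdd h).not_gt ht

theorem monotoneOn (hmono : Monotone F) (h0 : IntegrableOn F (Iio a))
    (hC : IntegrableOn (fun x => C - F x) (Ioi a)) : MonotoneOn (pseudoInv F) (Ioo 0 C) :=
  fun _ hη _ hζ hle => csSup_le_csSup (bddAbove_setOf_lt hmono hC hζ.2)
    (nonempty_setOf_lt h0 hη.1) fun _ hx => lt_of_lt_of_le hx hle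

theorem volume_lt_pseudoInv_inter_le (hmono : Monotone F) (h0 : IntegrableOn F (Iio a)) :
    volume ({η | t < pseudoInv F η} ∩ Ioo 0 C) ≤ ENNReal.ofReal (C - F t) := by
  have hsub : {η | t < pseudoInv F η} ∩ Ioo 0 C ⊆ Ioo (F t) C := fun η ⟨ht, hη⟩ =>
    ⟨lt_of_lt_pseudoInv hmono (nonempty_setOf_lt h0 hη.1) ht, hη.2⟩
  exact (measure_mono hsub).trans_eq Real.volume_Ioo

theorem volume_pseudoInv_lt_inter_le (hmono : Monotone F)
    (hC : IntegrableOn (fun x => C - F x) (Ioi a)) :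
    volume ({η | pseudoInv F η < t} ∩ Ioo 0 C) ≤ ENNReal.ofReal (F t) := by
  have hsub : {η | pseudoInv F η < t} ∩ Ioo 0 C ⊆ Ioc 0 (F t) := fun η ⟨ht, hη⟩ =>
    ⟨hη.1, le_of_pseudoInv_lt (bddAbove_setOf_lt hmono hC hη.2) ht⟩
  exact (measure_mono hsub).trans_eq (by rw [Real.volume_Ioc, sub_zero])

theorem integrableOn (hmono : Monotone F) (h0 : IntegrableOn F (Iio 0))
    (hC : IntegrableOn (fun x => C - F x) (Ioi 0)) : IntegrableOn (pseudoInv F) (Ioo 0 C) := by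
  refine integrable_of_lintegral_meas_lt_lt_top
    (aemeasurable_restrict_of_monotoneOn measurableSet_Ioo (monotoneOn hmono h0 hC)) ?_ ?_
  · calc ∫⁻ t in Ioi 0, volume.restrict (Ioo 0 C) {η | t < pseudoInv F η}
        ≤ ∫⁻ t in Ioi 0, ENNReal.ofReal (C - F t) := lintegral_mono fun t => by
          rw [Measure.restrict_apply' measurableSet_Ioo]
          exact volume_lt_pseudoInv_inter_le hmono h0
      _ < ∞ := hC.lintegral_lt_top
  · calc ∫⁻ t in Ioi 0, volume.restrict (Ioo 0 C) {η | pseudoInv F η < -t}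
        ≤ ∫⁻ t in Ioi 0, ENNReal.ofReal (F (-t)) := lintegral_mono fun t => by
          rw [Measure.restrict_apply' measurableSet_Ioo]
          exact volume_pseudoInv_lt_inter_le hmono hC
      _ < ∞ := (neg_zero (G := ℝ) ▸ h0).comp_neg_Ioi.lintegral_lt_top

theorem integrableOn_comp_mul (hmono : Monotone F) (h0 : IntegrableOn F (Iio 0))
    (hC : IntegrableOn (fun x => C - F x) (Ioi 0)) (hCpos : 0 < C) :
    IntegrableOn (fun η => pseudoInv F (C * η)) (Ioo 0 1) := by
  have h := ((intervalIntegrable_iff_integrableOn_Ioo_of_le hCpos.le).2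
    (integrableOn hmono h0 hC)).comp_mul_left (c := C)
  rw [zero_div, div_self hCpos.ne'] at h
  exact (intervalIntegrable_iff_integrableOn_Ioo_of_le zero_le_one).1 h

end pseudoInv

section Estimate

variable {α : Type*} [MeasurableSpace α] {ν : Measure α} [IsProbabilityMeasure ν]

theorem eLpNorm_const_mul_le_of_abs_le {L : α → ℝ} {c e : ℝ} (hL : ∀ᵐ x ∂ν, |L x| ≤ e / 2)
    (hc : 0 ≤ c) (p : ℝ≥0∞) :
    eLpNorm (fun x => c * L x) p ν ≤ ENNReal.ofReal (c / 2) * ENNReal.ofReal e := by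
  have hbound : ∀ᵐ x ∂ν, ‖c * L x‖ ≤ c / 2 * e := hL.mono fun x hx => by
    rw [Real.norm_eq_abs, abs_mul, abs_of_nonneg hc]
    linarith [mul_le_mul_of_nonneg_left hx hc]
  calc eLpNorm (fun x => c * L x) p ν ≤ ν univ ^ p.toReal⁻¹ * ENNReal.ofReal (c / 2 * e) :=
        eLpNorm_le_of_ae_bound hbound
    _ = ENNReal.ofReal (c / 2) * ENNReal.ofReal e := by
        rw [measure_univ, one_rpow, one_mul, ENNReal.ofReal_mul (by positivity)]

theorem eLpNorm_top_add_eLpNorm_one_le {L V W : α → ℝ} {e t : ℝ}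
    (hLm : AEStronglyMeasurable L ν) (hL : ∀ᵐ x ∂ν, |L x| ≤ e / 2)
    (hV : AEStronglyMeasurable V ν) (hW : AEStronglyMeasurable W ν) (ht : 0 ≤ t) :
    eLpNorm (fun x => t / 2 * L x + V x) ⊤ ν
        + eLpNorm (fun x => t ^ 2 / 4 * L x + (t * V x + W x)) 1 ν + ENNReal.ofReal e
      ≤ ENNReal.ofReal (1 + t + t ^ 2 / 8)
          * (eLpNorm V ⊤ ν + eLpNorm W 1 ν + ENNReal.ofReal e) := by
  set A := eLpNorm V ⊤ ν
  set B := eLpNorm W 1 ν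
  set E := ENNReal.ofReal e
  have hU : eLpNorm (fun x => t / 2 * L x + V x) ⊤ ν ≤ ENNReal.ofReal (t / 4) * E + A := by
    refine (eLpNorm_add_le (hLm.const_mul _) hV le_top).trans ?_
    gcongr
    exact (eLpNorm_const_mul_le_of_abs_le hL (by positivity) ⊤).trans_eq
      (by norm_num [div_div, E])
  have hVW : eLpNorm (fun x => t * V x + W x) 1 ν ≤ ENNReal.ofReal t * A + B := by
    refine (eLpNorm_add_le (hV.const_mul _) hW le_rfl).trans ?_
    gcongr
    calc eLpNorm (fun x => t * V x) 1 ν = ‖t‖ₑ * eLpNorm V 1 ν := eLpNorm_const_smul t V 1 ν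
      _ ≤ ENNReal.ofReal t * A := by
          rw [Real.enorm_eq_ofReal ht]
          gcongr
          exact eLpNorm_le_eLpNorm_of_exponent_le le_top hV
  have hX : eLpNorm (fun x => t ^ 2 / 4 * L x + (t * V x + W x)) 1 ν
      ≤ ENNReal.ofReal (t ^ 2 / 8) * E + (ENNReal.ofReal t * A + B) := by
    refine (eLpNorm_add_le (hLm.const_mul _) ((hV.const_mul _).add hW) le_rfl).trans ?_
    gcongr
    · exact (eLpNorm_const_mul_le_of_abs_le hL (by positivity) 1).trans_eq
        (by norm_num [div_div, E])
    · exact hVW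
  calc _ ≤ ENNReal.ofReal (t / 4) * E + A + (ENNReal.ofReal (t ^ 2 / 8) * E
          + (ENNReal.ofReal t * A + B)) + E := by gcongr
    _ ≤ ENNReal.ofReal t * E + A + (ENNReal.ofReal (t ^ 2 / 8) * E
          + (ENNReal.ofReal t * A + B)) + E := by gcongr; linarith
    _ = (A + B + E) + ENNReal.ofReal t * (A + E) + ENNReal.ofReal (t ^ 2 / 8) * E := by ring
    _ ≤ (A + B + E) + ENNReal.ofReal t * (A + B + E)
          + ENNReal.ofReal (t ^ 2 / 8) * (A + B + E) := by
        gcongr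
        · exact le_self_add
        · exact le_add_self
    _ = ENNReal.ofReal (1 + t + t ^ 2 / 8) * (A + B + E) := by
        rw [ENNReal.ofReal_add (by positivity) (by positivity),
          ENNReal.ofReal_add zero_le_one ht, ENNReal.ofReal_one]
        ring

end Estimate

theorem monotone_measure_Iio_toReal (μ : Measure ℝ) [IsFiniteMeasure μ] :
    Monotone fun x => (μ (Iio x)).toReal := fun _ _ hab =>
  ENNReal.toReal_mono (measure_ne_top μ _) (measure_mono (Iio_subset_Iio hab))

theorem abs_mul_sub_one_half_le (c : ℝ) {η : ℝ} (hη : η ∈ Icc (0 : ℝ) 1) :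
    |c * (η - 1 / 2)| ≤ |c| / 2 := by
  have hη' : |η - 1 / 2| ≤ 1 / 2 := abs_le.2 ⟨by linarith [hη.1], by linarith [hη.2]⟩
  simpa only [abs_mul, mul_one_div] using mul_le_mul_of_nonneg_left hη' (abs_nonneg c)

theorem solution_comp_mul_eq {C t η : ℝ} {F u χ₀ 𝒰₀ : ℝ → ℝ} {χ 𝒰 : ℝ → ℝ → ℝ} (hC : 0 < C)
    (hχ₀ : ∀ η ∈ Ioo 0 C, χ₀ η = sSup {x : ℝ | F x < η})
    (h𝒰₀ : ∀ η ∈ Ioo 0 C, 𝒰₀ η = u (χ₀ η))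
    (hχ : ∀ t, ∀ η ∈ Ioo 0 C, χ t η = t ^ 2 / 4 * (η - C / 2) + t * 𝒰₀ η + χ₀ η)
    (h𝒰 : ∀ t, ∀ η ∈ Ioo 0 C, 𝒰 t η = t / 2 * (η - C / 2) + 𝒰₀ η) (hη : η ∈ Ioo (0 : ℝ) 1) :
    𝒰 t (C * η) = t / 2 * (C * (η - 1 / 2)) + u (pseudoInv F (C * η)) ∧
      χ t (C * η) = t ^ 2 / 4 * (C * (η - 1 / 2)) + t * u (pseudoInv F (C * η))
        + pseudoInv F (C * η) := by
  have h : C * η ∈ Ioo 0 C := ⟨mul_pos hC hη.1, mul_lt_of_lt_one_right hC hη.2⟩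
  rw [h𝒰 t _ h, hχ t _ h, h𝒰₀ _ h, hχ₀ _ h, pseudoInv]
  exact ⟨by ring, by ring⟩

theorem lipschitz_metric_HS_general
    (μ₁ μ₂ : Measure ℝ) [IsFiniteMeasure μ₁] [IsFiniteMeasure μ₂]
    (C₁ C₂ : ℝ)
    (hC₁pos : 0 < C₁) (hC₂pos : 0 < C₂)
    (F₁ F₂ : ℝ → ℝ)
    (hF₁ : ∀ x, F₁ x = (μ₁ (Iio x)).toReal)
    (hF₂ : ∀ x, F₂ x = (μ₂ (Iio x)).toReal)
    (hmom₁ : IntegrableOn F₁ (Iio 0) ∧ IntegrableOn (fun x => C₁ - F₁ x) (Ioi 0))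
    (hmom₂ : IntegrableOn F₂ (Iio 0) ∧ IntegrableOn (fun x => C₂ - F₂ x) (Ioi 0))
    (u₁ u₂ : ℝ → ℝ)
    (hu₁ : Continuous u₁) (hu₂ : Continuous u₂)
    (hu₁b : ∃ M, ∀ x, |u₁ x| ≤ M) (hu₂b : ∃ M, ∀ x, |u₂ x| ≤ M)
    (χ₀₁ χ₀₂ 𝒰₀₁ 𝒰₀₂ : ℝ → ℝ)
    (hχ₀₁ : ∀ η ∈ Ioo 0 C₁, χ₀₁ η = sSup {x : ℝ | F₁ x < η})
    (hχ₀₂ : ∀ η ∈ Ioo 0 C₂, χ₀₂ η = sSup {x : ℝ | F₂ x < η})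
    (h𝒰₀₁ : ∀ η ∈ Ioo 0 C₁, 𝒰₀₁ η = u₁ (χ₀₁ η))
    (h𝒰₀₂ : ∀ η ∈ Ioo 0 C₂, 𝒰₀₂ η = u₂ (χ₀₂ η))
    (χ₁ χ₂ 𝒰₁ 𝒰₂ : ℝ → ℝ → ℝ)
    (hχ₁ : ∀ t, ∀ η ∈ Ioo 0 C₁,
      χ₁ t η = t ^ 2 / 4 * (η - C₁ / 2) + t * 𝒰₀₁ η + χ₀₁ η)
    (hχ₂ : ∀ t, ∀ η ∈ Ioo 0 C₂,
      χ₂ t η = t ^ 2 / 4 * (η - C₂ / 2) + t * 𝒰₀₂ η + χ₀₂ η)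
    (h𝒰₁ : ∀ t, ∀ η ∈ Ioo 0 C₁, 𝒰₁ t η = t / 2 * (η - C₁ / 2) + 𝒰₀₁ η)
    (h𝒰₂ : ∀ t, ∀ η ∈ Ioo 0 C₂, 𝒰₂ t η = t / 2 * (η - C₂ / 2) + 𝒰₀₂ η)
    (d : ℝ → ℝ≥0∞)
    (hd : ∀ t, d t
      = eLpNorm (fun η => 𝒰₁ t (C₁ * η) - 𝒰₂ t (C₂ * η)) ⊤
          (volume.restrict (Ioo (0:ℝ) 1))
        + eLpNorm (fun η => χ₁ t (C₁ * η) - χ₂ t (C₂ * η)) 1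
          (volume.restrict (Ioo (0:ℝ) 1))
        + ENNReal.ofReal |C₁ - C₂|) :
    ∀ t : ℝ, 0 ≤ t →
      d t < ⊤ ∧ d t ≤ ENNReal.ofReal (1 + t + t ^ 2 / 8) * d 0 := by
  intro t ht
  set ν := volume.restrict (Ioo (0:ℝ) 1)
  have : IsProbabilityMeasure ν := ⟨by simp [ν]⟩
  have hH₁ := pseudoInv.integrableOn_comp_mul (funext hF₁ ▸ monotone_measure_Iio_toReal μ₁)
    hmom₁.1 hmom₁.2 hC₁pos
  have hH₂ := pseudoInv.integrableOn_comp_mul (funext hF₂ ▸ monotone_measure_Iio_toReal μ₂)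
    hmom₂.1 hmom₂.2 hC₂pos
  set V := fun η => u₁ (pseudoInv F₁ (C₁ * η)) - u₂ (pseudoInv F₂ (C₂ * η))
  set W := fun η => pseudoInv F₁ (C₁ * η) - pseudoInv F₂ (C₂ * η)
  set L := fun η : ℝ => (C₁ - C₂) * (η - 1 / 2)
  have hd' : ∀ s, d s = eLpNorm (fun η => s / 2 * L η + V η) ⊤ ν
      + eLpNorm (fun η => s ^ 2 / 4 * L η + (s * V η + W η)) 1 ν + ENNReal.ofReal |C₁ - C₂| := by
    intro s
    rw [hd s]
    congr 2 <;> refine eLpNorm_congr_ae ((ae_restrict_mem measurableSet_Ioo).mono fun η hη => ?_)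
      <;> obtain ⟨h𝒰₁η, hχ₁η⟩ := solution_comp_mul_eq hC₁pos hχ₀₁ h𝒰₀₁ hχ₁ h𝒰₁ (t := s) hη
      <;> obtain ⟨h𝒰₂η, hχ₂η⟩ := solution_comp_mul_eq hC₂pos hχ₀₂ h𝒰₀₂ hχ₂ h𝒰₂ (t := s) hη
      <;> simp only [V, W, L, h𝒰₁η, hχ₁η, h𝒰₂η, hχ₂η] <;> ring
  have hd0 : d 0 = eLpNorm V ⊤ ν + eLpNorm W 1 ν + ENNReal.ofReal |C₁ - C₂| := by
    simpa using hd' 0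
  obtain ⟨⟨M₁, hM₁⟩, ⟨M₂, hM₂⟩⟩ := And.intro hu₁b hu₂b
  have hV : MemLp V ⊤ ν :=
    MemLp.of_bound ((hu₁.comp_aestronglyMeasurable hH₁.1).sub (hu₂.comp_aestronglyMeasurable hH₂.1))
      (M₁ + M₂) (ae_of_all _ fun _ => (norm_sub_le _ _).trans (add_le_add (hM₁ _) (hM₂ _)))
  have hW : MemLp W 1 ν := memLp_one_iff_integrable.2 (hH₁.sub hH₂)
  have hL : ∀ᵐ η ∂ν, |L η| ≤ |C₁ - C₂| / 2 := (ae_restrict_mem measurableSet_Ioo).mono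
    fun η hη => abs_mul_sub_one_half_le _ (Ioo_subset_Icc_self hη)
  have hle := eLpNorm_top_add_eLpNorm_one_le (by fun_prop : Continuous L).aestronglyMeasurable
    hL hV.1 hW.1 ht
  rw [← hd', ← hd0] at hle
  have hd0fin : d 0 < ⊤ :=
    hd0 ▸ add_lt_top.2 ⟨add_lt_top.2 ⟨hV.eLpNorm_lt_top, hW.eLpNorm_lt_top⟩, ofReal_lt_top⟩
  exact ⟨hle.trans_lt (mul_lt_top ofReal_lt_top hd0fin), hle⟩

theorem lipschitz_metric_HS
    (μ₁ μ₂ : Measure ℝ) [IsFiniteMeasure μ₁] [IsFiniteMeasure μ₂]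
    (C₁ C₂ : ℝ)
    (hC₁ : C₁ = (μ₁ univ).toReal) (hC₂ : C₂ = (μ₂ univ).toReal)
    (hC₁pos : 0 < C₁) (hC₂pos : 0 < C₂)
    (F₁ F₂ : ℝ → ℝ)
    (hF₁ : ∀ x, F₁ x = (μ₁ (Iio x)).toReal)
    (hF₂ : ∀ x, F₂ x = (μ₂ (Iio x)).toReal)
    (hmom₁ : IntegrableOn F₁ (Iio 0) ∧ IntegrableOn (fun x => C₁ - F₁ x) (Ioi 0))
    (hmom₂ : IntegrableOn F₂ (Iio 0) ∧ IntegrableOn (fun x => C₂ - F₂ x) (Ioi 0))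
    (u₁ u₂ : ℝ → ℝ)
    (hu₁ : Continuous u₁) (hu₂ : Continuous u₂)
    (hu₁b : ∃ M, ∀ x, |u₁ x| ≤ M) (hu₂b : ∃ M, ∀ x, |u₂ x| ≤ M)
    (χ₀₁ χ₀₂ 𝒰₀₁ 𝒰₀₂ : ℝ → ℝ)
    (hχ₀₁ : ∀ η ∈ Ioo 0 C₁, χ₀₁ η = sSup {x : ℝ | F₁ x < η})
    (hχ₀₂ : ∀ η ∈ Ioo 0 C₂, χ₀₂ η = sSup {x : ℝ | F₂ x < η})
    (h𝒰₀₁ : ∀ η ∈ Ioo 0 C₁, 𝒰₀₁ η = u₁ (χ₀₁ η))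
    (h𝒰₀₂ : ∀ η ∈ Ioo 0 C₂, 𝒰₀₂ η = u₂ (χ₀₂ η))
    (χ₁ χ₂ 𝒰₁ 𝒰₂ : ℝ → ℝ → ℝ)
    (hχ₁ : ∀ t, ∀ η ∈ Ioo 0 C₁,
      χ₁ t η = t ^ 2 / 4 * (η - C₁ / 2) + t * 𝒰₀₁ η + χ₀₁ η)
    (hχ₂ : ∀ t, ∀ η ∈ Ioo 0 C₂,
      χ₂ t η = t ^ 2 / 4 * (η - C₂ / 2) + t * 𝒰₀₂ η + χ₀₂ η)
    (h𝒰₁ : ∀ t, ∀ η ∈ Ioo 0 C₁, 𝒰₁ t η = t / 2 * (η - C₁ / 2) + 𝒰₀₁ η)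
    (h𝒰₂ : ∀ t, ∀ η ∈ Ioo 0 C₂, 𝒰₂ t η = t / 2 * (η - C₂ / 2) + 𝒰₀₂ η)
    (d : ℝ → ℝ≥0∞)
    (hd : ∀ t, d t
      = eLpNorm (fun η => 𝒰₁ t (C₁ * η) - 𝒰₂ t (C₂ * η)) ⊤
          (volume.restrict (Ioo (0:ℝ) 1))
        + eLpNorm (fun η => χ₁ t (C₁ * η) - χ₂ t (C₂ * η)) 1
          (volume.restrict (Ioo (0:ℝ) 1))
        + ENNReal.ofReal |C₁ - C₂|) :
    ∀ t : ℝ, 0 ≤ t →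
      d t < ⊤ ∧ d t ≤ ENNReal.ofReal (1 + t + t ^ 2 / 8) * d 0 :=
  lipschitz_metric_HS_general μ₁ μ₂ C₁ C₂ hC₁pos hC₂pos F₁ F₂ hF₁ hF₂ hmom₁ hmom₂ u₁ u₂ hu₁ hu₂ hu₁b
    hu₂b χ₀₁ χ₀₂ 𝒰₀₁ 𝒰₀₂ hχ₀₁ hχ₀₂ h𝒰₀₁ h𝒰₀₂ χ₁ χ₂ 𝒰₁ 𝒰₂ hχ₁ hχ₂ h𝒰₁ h𝒰₂ d hd
end

section
/- For j = 1,2, let u_j : ℝ → ℝ be bounded, locally absolutely continuous with derivative u_j' ∈ L²(ℝ), and let μ_j be a nonnegative finite Borel measure on ℝ whose absolutely continuous part with respect to Lebesgue measure has density (u_j')². Assume C := μ₁(ℝ) = μ₂(ℝ) > 0, and define χ_j(η) = sup{x ∈ ℝ : μ_j((−∞,x)) < η} for η ∈ (0,C). If χ₁(η) = χ₂(η) and u₁(χ₁(η)) = u₂(χ₂(η)) for every η ∈ (0,C), then μ₁ = μ₂ and u₁ = u₂. -/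
/-!
The pseudo-inverse `χ` of the left-continuous distribution function `F x = μ (Iio x)` is a
Galois-type inverse of `F`: `F x < η → x ≤ χ η → F x ≤ η`. Hence `χ` determines `F`, and thereby
the measure. Moreover, every open interval avoiding the range of `χ` is `μ`-null; since
`(u')² dx` is the absolutely continuous part of `μ`, `u` is constant on the closure of such an
interval. As `u₁ = u₂` on the range of `χ`, hence on its closure by continuity, the two functions
agree everywhere.
-/

open MeasureTheory Set Filter Topology

namespace MeasureTheory.Measure

theorem ext_of_Iio {α : Type*} [TopologicalSpace α] {_ : MeasurableSpace α}
    [SecondCountableTopology α] [ConditionallyCompleteLinearOrder α] [OrderTopology α]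
    [BorelSpace α] [NoMaxOrder α] (μ ν : Measure α) [IsFiniteMeasure μ]
    (h : ∀ x, μ (Iio x) = ν (Iio x)) : μ = ν := by
  refine ext_of_Ico μ ν fun a b hab => ?_
  have hν : ν (Iio a) ≠ ⊤ := h a ▸ measure_ne_top μ _
  rw [← Iio_sdiff_Iio, measure_sdiff (Iio_subset_Iio hab.le) nullMeasurableSet_Iio
    (measure_ne_top μ _), measure_sdiff (Iio_subset_Iio hab.le) nullMeasurableSet_Iio hν, h, h]

noncomputable def leftCdf (μ : Measure ℝ) (x : ℝ) : ℝ := (μ (Iio x)).toReal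

/-- Meaningful only for `0 < η < μ univ`: otherwise the set is empty or unbounded above and
`sSup` returns the junk value `0`. -/
noncomputable def pseudoInverse (μ : Measure ℝ) (η : ℝ) : ℝ := sSup {x | μ.leftCdf x < η}

section leftCdf

variable (μ : Measure ℝ) [IsFiniteMeasure μ]

theorem leftCdf_mono : Monotone μ.leftCdf := fun _ _ hxy =>
  ENNReal.toReal_mono (measure_ne_top μ _) (measure_mono (Iio_subset_Iio hxy))

theorem leftCdf_le_measure_univ (x : ℝ) : μ.leftCdf x ≤ (μ univ).toReal :=
  ENNReal.toReal_mono (measure_ne_top μ _) (measure_mono (subset_univ _))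

theorem tendsto_leftCdf_atBot : Tendsto μ.leftCdf atBot (𝓝 0) := by
  have hempty : ⋂ x : ℝ, Iio x = ∅ :=
    eq_empty_of_forall_notMem fun y hy => lt_irrefl y (mem_iInter.1 hy y)
  have h := tendsto_measure_iInter_atBot (μ := μ) (fun _ => nullMeasurableSet_Iio)
    (fun _ _ => Iio_subset_Iio) ⟨0, measure_ne_top μ _⟩
  rw [hempty, measure_empty] at h
  exact (ENNReal.tendsto_toReal ENNReal.zero_ne_top).comp h

theorem tendsto_leftCdf_atTop : Tendsto μ.leftCdf atTop (𝓝 (μ univ).toReal) := by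
  have h := tendsto_measure_iUnion_atTop (μ := μ) (fun _ _ => Iio_subset_Iio (α := ℝ))
  rw [iUnion_Iio] at h
  exact (ENNReal.tendsto_toReal (measure_ne_top μ _)).comp h

theorem tendsto_leftCdf_nhdsLT (x : ℝ) : Tendsto μ.leftCdf (𝓝[<] x) (𝓝 (μ.leftCdf x)) := by
  have h := tendsto_measure_iUnion_atTop (μ := μ)
    (fun (y z : Iio x) (hyz : y ≤ z) => Iio_subset_Iio (α := ℝ) hyz)
  rw [← biUnion_eq_iUnion (Iio x) fun y _ => Iio y, isLUB_Iio.biUnion_Iio_eq] at h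
  rw [← map_coe_Iio_atTop, tendsto_map'_iff]
  exact (ENNReal.tendsto_toReal (measure_ne_top μ _)).comp h

variable {μ} {x y η : ℝ}

theorem bddAbove_setOf_leftCdf_lt (hη : η < (μ univ).toReal) :
    BddAbove {x | μ.leftCdf x < η} := by
  obtain ⟨z, hz⟩ := ((μ.tendsto_leftCdf_atTop).eventually_const_lt hη).exists
  exact ⟨z, fun x hx => (μ.leftCdf_mono.reflect_lt (hx.trans hz)).le⟩

theorem le_pseudoInverse (hη : η < (μ univ).toReal) (hx : μ.leftCdf x < η) :
    x ≤ μ.pseudoInverse η :=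
  le_csSup (bddAbove_setOf_leftCdf_lt hη) hx

theorem leftCdf_lt_of_lt_pseudoInverse (hη : 0 < η) (hy : y < μ.pseudoInverse η) :
    μ.leftCdf y < η := by
  obtain ⟨z, hz, hyz⟩ :=
    exists_lt_of_lt_csSup ((μ.tendsto_leftCdf_atBot).eventually_lt_const hη).exists hy
  exact (μ.leftCdf_mono hyz.le).trans_lt hz

theorem leftCdf_le_of_le_pseudoInverse (hη : 0 < η) (hx : x ≤ μ.pseudoInverse η) :
    μ.leftCdf x ≤ η :=
  le_of_tendsto (μ.tendsto_leftCdf_nhdsLT x) (eventually_nhdsWithin_of_forall fun _ hy =>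
    (leftCdf_lt_of_lt_pseudoInverse hη (lt_of_lt_of_le hy hx)).le)

theorem pseudoInverse_mem_Icc (hxη : μ.leftCdf x < η) (hηy : η < μ.leftCdf y) :
    μ.pseudoInverse η ∈ Icc x y :=
  ⟨le_pseudoInverse (hηy.trans_le (μ.leftCdf_le_measure_univ y)) hxη,
    le_of_not_gt fun hy => (leftCdf_lt_of_lt_pseudoInverse
      (ENNReal.toReal_nonneg.trans_lt hxη) hy).not_gt hηy⟩

theorem measure_Ico_eq_zero_of_leftCdf_le (hxy : x ≤ y) (h : μ.leftCdf y ≤ μ.leftCdf x) :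
    μ (Ico x y) = 0 := by
  rw [← Iio_sdiff_Iio, measure_sdiff (Iio_subset_Iio hxy) nullMeasurableSet_Iio
    (measure_ne_top μ _)]
  exact tsub_eq_zero_of_le
    ((ENNReal.toReal_le_toReal (measure_ne_top μ _) (measure_ne_top μ _)).mp h)

theorem measure_Ioo_eq_zero_of_disjoint_pseudoInverse_image {a b : ℝ}
    (h : Disjoint (μ.pseudoInverse '' Ioo 0 (μ univ).toReal) (Ioo a b)) : μ (Ioo a b) = 0 := by
  have hIco : ∀ c d, a < c → c ≤ d → d < b → μ (Ico c d) = 0 := by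
    intro c d hac hcd hdb
    refine measure_Ico_eq_zero_of_leftCdf_le hcd (le_of_not_gt fun hlt => ?_)
    obtain ⟨η, hcη, hηd⟩ := exists_between hlt
    have hη : η ∈ Ioo 0 (μ univ).toReal :=
      ⟨ENNReal.toReal_nonneg.trans_lt hcη, hηd.trans_le (μ.leftCdf_le_measure_univ d)⟩
    obtain ⟨hc, hd⟩ := pseudoInverse_mem_Icc hcη hηd
    exact h.notMem_of_mem_left (mem_image_of_mem _ hη) ⟨hac.trans_le hc, hd.trans_lt hdb⟩
  refine measure_null_of_locally_null _ fun y hy => ?_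
  obtain ⟨c, hac, hcy⟩ := exists_between hy.1
  obtain ⟨d, hyd, hdb⟩ := exists_between hy.2
  exact ⟨Ico c d, mem_nhdsWithin_of_mem_nhds (Ico_mem_nhds hcy hyd),
    hIco c d hac (hcy.trans hyd).le hdb⟩

end leftCdf

theorem leftCdf_le_of_pseudoInverse_eq {μ ν : Measure ℝ} [IsFiniteMeasure μ] [IsFiniteMeasure ν]
    (huniv : μ univ = ν univ)
    (h : ∀ η ∈ Ioo 0 (μ univ).toReal, μ.pseudoInverse η = ν.pseudoInverse η) (x : ℝ) :
    ν.leftCdf x ≤ μ.leftCdf x := by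
  by_contra! hlt
  obtain ⟨η, hμη, hην⟩ := exists_between hlt
  have hη : η ∈ Ioo 0 (μ univ).toReal :=
    ⟨ENNReal.toReal_nonneg.trans_lt hμη, huniv ▸ hην.trans_le (ν.leftCdf_le_measure_univ x)⟩
  have hx : x ≤ ν.pseudoInverse η := h η hη ▸ le_pseudoInverse hη.2 hμη
  exact (leftCdf_le_of_le_pseudoInverse hη.1 hx).not_gt hην

theorem ext_of_pseudoInverse_eq {μ ν : Measure ℝ} [IsFiniteMeasure μ] [IsFiniteMeasure ν]
    (huniv : μ univ = ν univ)
    (h : ∀ η ∈ Ioo 0 (μ univ).toReal, μ.pseudoInverse η = ν.pseudoInverse η) : μ = ν := by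
  have h' : ∀ η ∈ Ioo 0 (ν univ).toReal, ν.pseudoInverse η = μ.pseudoInverse η :=
    fun η hη => (h η (huniv ▸ hη)).symm
  refine ext_of_Iio μ ν fun x => (ENNReal.toReal_eq_toReal_iff' (measure_ne_top μ _)
    (measure_ne_top ν _)).mp ?_
  exact le_antisymm (leftCdf_le_of_pseudoInverse_eq huniv.symm h' x)
    (leftCdf_le_of_pseudoInverse_eq huniv h x)

end MeasureTheory.Measure

theorem ae_restrict_eq_zero_of_rnDeriv_eq_sq {α : Type*} [MeasurableSpace α] {μ ν : Measure α}
    {g : α → ℝ} (hac : μ.rnDeriv ν =ᵐ[ν] fun x => ENNReal.ofReal (g x ^ 2)) {s : Set α}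
    (hs : μ s = 0) : ∀ᵐ x ∂ν.restrict s, g x = 0 := by
  have hint : ∫⁻ x in s, ENNReal.ofReal (g x ^ 2) ∂ν = 0 := by
    rw [← lintegral_congr_ae (ae_restrict_of_ae hac)]
    exact nonpos_iff_eq_zero.mp (hs ▸ Measure.setLIntegral_rnDeriv_le s)
  have hmeas : AEMeasurable (fun x => ENNReal.ofReal (g x ^ 2)) (ν.restrict s) :=
    ((Measure.measurable_rnDeriv μ ν).aemeasurable.congr hac).restrict
  filter_upwards [(lintegral_eq_zero_iff' hmeas).mp hint] with x hx
  simpa using hx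

section Primitive

variable {u g : ℝ → ℝ} (hu : ∀ x, u x = u 0 + ∫ y in (0 : ℝ)..x, g y)
  (hg : LocallyIntegrable g volume)
include hu hg

theorem continuous_of_eq_add_integral : Continuous u := by
  rw [funext hu]
  exact continuous_const.add (intervalIntegral.continuous_primitive
    (fun a b => (hg.integrableOn_isCompact isCompact_uIcc).intervalIntegrable) 0)

theorem eq_of_ae_restrict_Ioo_eq_zero {a b : ℝ} (hab : a ≤ b)
    (h0 : ∀ᵐ x ∂volume.restrict (Ioo a b), g x = 0) : u a = u b := by
  have hint : ∀ c d : ℝ, IntervalIntegrable g volume c d := fun c d =>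
    (hg.integrableOn_isCompact isCompact_uIcc).intervalIntegrable
  have hzero : ∫ y in a..b, g y = 0 := by
    rw [intervalIntegral.integral_of_le hab, ← Measure.restrict_congr_set Ioo_ae_eq_Ioc]
    exact integral_eq_zero_of_ae h0
  have hsub := intervalIntegral.integral_interval_sub_left (hint 0 b) (hint 0 a)
  rw [hu a, hu b]
  linarith

end Primitive

theorem eq_of_eqOn_of_const_on_gaps {α β : Type*} [ConditionallyCompleteLinearOrder α]
    [TopologicalSpace α] [OrderTopology α] [TopologicalSpace β] [T2Space β] {f₁ f₂ : α → β}
    {S : Set α} (h₁ : Continuous f₁) (h₂ : Continuous f₂) (hS : S.Nonempty) (hEq : EqOn f₁ f₂ S)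
    (hgap : ∀ a b, a ≤ b → Disjoint S (Ioo a b) → f₁ a = f₁ b ∧ f₂ a = f₂ b) : f₁ = f₂ := by
  have hcl : EqOn f₁ f₂ (closure S) := hEq.closure h₁ h₂
  funext x
  rcases (S ∩ Iic x).eq_empty_or_nonempty with hE | hne
  · have hlb : x ∈ lowerBounds S := fun s hs =>
      le_of_not_ge fun hsx => hE.subset ⟨hs, hsx⟩
    have hdisj : Disjoint S (Ioo x (sInf S)) := disjoint_left.2 fun s hs hmem =>
      hmem.2.not_ge (csInf_le ⟨x, hlb⟩ hs)
    obtain ⟨h₁x, h₂x⟩ := hgap x (sInf S) (le_csInf hS hlb) hdisj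
    rw [h₁x, h₂x, hcl (csInf_mem_closure hS ⟨x, hlb⟩)]
  · have hub : x ∈ upperBounds (S ∩ Iic x) := fun _ hs => hs.2
    have hdisj : Disjoint S (Ioo (sSup (S ∩ Iic x)) x) := disjoint_left.2 fun s hs hmem =>
      hmem.1.not_ge (le_csSup ⟨x, hub⟩ ⟨hs, hmem.2.le⟩)
    obtain ⟨h₁x, h₂x⟩ := hgap _ x (csSup_le hne hub) hdisj
    rw [← h₁x, ← h₂x,
      hcl (closure_mono inter_subset_left (csSup_mem_closure hne ⟨x, hub⟩))]

theorem eulerian_determined_by_pseudo_inverse_general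
    (u₁ u₂ : ℝ → ℝ)
    (g₁ g₂ : ℝ → ℝ)
    (hg₁ : MemLp g₁ 2 (volume : Measure ℝ))
    (hg₂ : MemLp g₂ 2 (volume : Measure ℝ))
    (hAC₁ : ∀ x : ℝ, u₁ x = u₁ 0 + ∫ y in (0:ℝ)..x, g₁ y)
    (hAC₂ : ∀ x : ℝ, u₂ x = u₂ 0 + ∫ y in (0:ℝ)..x, g₂ y)
    (μ₁ μ₂ : Measure ℝ) [IsFiniteMeasure μ₁] [IsFiniteMeasure μ₂]
    (hacpart₁ : μ₁.rnDeriv volume =ᵐ[volume] fun x => ENNReal.ofReal ((g₁ x) ^ 2))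
    (hacpart₂ : μ₂.rnDeriv volume =ᵐ[volume] fun x => ENNReal.ofReal ((g₂ x) ^ 2))
    (C : ℝ) (hC : C = (μ₁ univ).toReal) (hC' : μ₁ univ = μ₂ univ) (hCpos : 0 < C)
    (χ₁ χ₂ : ℝ → ℝ)
    (hχ₁ : ∀ η ∈ Ioo 0 C, χ₁ η = sSup {x : ℝ | (μ₁ (Iio x)).toReal < η})
    (hχ₂ : ∀ η ∈ Ioo 0 C, χ₂ η = sSup {x : ℝ | (μ₂ (Iio x)).toReal < η})
    (heq : ∀ η ∈ Ioo 0 C, χ₁ η = χ₂ η ∧ u₁ (χ₁ η) = u₂ (χ₂ η)) :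
    μ₁ = μ₂ ∧ u₁ = u₂ := by
  subst hC
  have hμ : μ₁ = μ₂ := Measure.ext_of_pseudoInverse_eq hC' fun η hη =>
    (hχ₁ η hη).symm.trans ((heq η hη).1.trans (hχ₂ η hη))
  subst hμ
  have hg₁' := hg₁.locallyIntegrable one_le_two
  have hg₂' := hg₂.locallyIntegrable one_le_two
  refine ⟨rfl, eq_of_eqOn_of_const_on_gaps (continuous_of_eq_add_integral hAC₁ hg₁')
    (continuous_of_eq_add_integral hAC₂ hg₂') ((nonempty_Ioo.2 hCpos).image χ₁) ?_ ?_⟩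
  · rintro _ ⟨η, hη, rfl⟩
    exact (heq η hη).2.trans (congrArg u₂ (heq η hη).1.symm)
  · intro a b hab hdisj
    have h0 : μ₁ (Ioo a b) = 0 :=
      Measure.measure_Ioo_eq_zero_of_disjoint_pseudoInverse_image (image_congr hχ₁ ▸ hdisj)
    exact ⟨eq_of_ae_restrict_Ioo_eq_zero hAC₁ hg₁' hab
        (ae_restrict_eq_zero_of_rnDeriv_eq_sq hacpart₁ h0),
      eq_of_ae_restrict_Ioo_eq_zero hAC₂ hg₂' hab
        (ae_restrict_eq_zero_of_rnDeriv_eq_sq hacpart₂ h0)⟩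

theorem eulerian_determined_by_pseudo_inverse
    (u₁ u₂ : ℝ → ℝ)
    (hu₁b : ∃ M, ∀ x, |u₁ x| ≤ M) (hu₂b : ∃ M, ∀ x, |u₂ x| ≤ M)
    (g₁ g₂ : ℝ → ℝ)
    (hg₁ : MemLp g₁ 2 (volume : Measure ℝ))
    (hg₂ : MemLp g₂ 2 (volume : Measure ℝ))
    (hAC₁ : ∀ x : ℝ, u₁ x = u₁ 0 + ∫ y in (0:ℝ)..x, g₁ y)
    (hAC₂ : ∀ x : ℝ, u₂ x = u₂ 0 + ∫ y in (0:ℝ)..x, g₂ y)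
    (μ₁ μ₂ : Measure ℝ) [IsFiniteMeasure μ₁] [IsFiniteMeasure μ₂]
    (hacpart₁ : μ₁.rnDeriv volume =ᵐ[volume] fun x => ENNReal.ofReal ((g₁ x) ^ 2))
    (hacpart₂ : μ₂.rnDeriv volume =ᵐ[volume] fun x => ENNReal.ofReal ((g₂ x) ^ 2))
    (C : ℝ) (hC : C = (μ₁ univ).toReal) (hC' : μ₁ univ = μ₂ univ) (hCpos : 0 < C)
    (χ₁ χ₂ : ℝ → ℝ)
    (hχ₁ : ∀ η ∈ Ioo 0 C, χ₁ η = sSup {x : ℝ | (μ₁ (Iio x)).toReal < η})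
    (hχ₂ : ∀ η ∈ Ioo 0 C, χ₂ η = sSup {x : ℝ | (μ₂ (Iio x)).toReal < η})
    (heq : ∀ η ∈ Ioo 0 C, χ₁ η = χ₂ η ∧ u₁ (χ₁ η) = u₂ (χ₂ η)) :
    μ₁ = μ₂ ∧ u₁ = u₂ :=
  eulerian_determined_by_pseudo_inverse_general u₁ u₂ g₁ g₂ hg₁ hg₂ hAC₁ hAC₂ μ₁ μ₂ hacpart₁
    hacpart₂ C hC hC' hCpos χ₁ χ₂ hχ₁ hχ₂ heq
end
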